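/- In a majority-vote aggregation over an odd number 2k+1 of independent binary predictions each correct with probability q > 1/2, the probability that the majority is correct is at least q. Formally: if X_1,...,X_{2k+1} are i.i.d. Bernoulli(q) with q ≥ 1/2, then P(Σ X_i ≥ k+1) ≥ q. -/

import Mathlib

/-!
The event that the majority is correct is the disjoint union, over the sets `t` of at least
`k + 1` voters, of the events that exactly the voters in `t` are correct; by independence these
have probability `w t = q ^ #t * (1 - q) ^ #tᶜ`. Complementation pairs each majority set `t`
with a minority set, and `q * w tᶜ ≤ (1 - q) * w t` since `#tᶜ < #t` and `1 - q ≤ q`. Summing,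
with `A` the total weight of the majority sets, gives `q * (1 - A) ≤ (1 - q) * A`, i.e. `q ≤ A`.
-/

open MeasureTheory ProbabilityTheory Finset

section Combinatorics

variable {ι : Type*} [Fintype ι] [DecidableEq ι]

theorem Fintype.sum_pow_mul_pow_card_compl {R : Type*} [CommSemiring R] (a b : R) :
    ∑ t : Finset ι, a ^ #t * b ^ #tᶜ = (a + b) ^ Fintype.card ι := by
  simp_rw [card_compl]
  exact Fintype.sum_pow_mul_eq_add_pow ι a b

theorem Finset.sum_filter_compl {M : Type*} [AddCommMonoid M] (P : Finset ι → Prop)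
    [DecidablePred P] (f : Finset ι → M) :
    ∑ t with P tᶜ, f t = ∑ t with P t, f tᶜ := by
  simp only [sum_filter]
  exact Fintype.sum_equiv (compl_involutive.toPerm _) _ _ fun t => by simp

theorem pow_succ_mul_pow_le_of_lt {R : Type*} [CommSemiring R] [PartialOrder R] [IsOrderedRing R]
    {p q : R} (hp : 0 ≤ p) (hpq : p ≤ q) {a b : ℕ} (hba : b < a) :
    q ^ (b + 1) * p ^ a ≤ p ^ (b + 1) * q ^ a := by
  have hq : 0 ≤ q := hp.trans hpq
  obtain ⟨m, rfl⟩ := Nat.exists_eq_add_of_lt hba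
  calc q ^ (b + 1) * p ^ (b + m + 1) = (q ^ (b + 1) * p ^ (b + 1)) * p ^ m := by ring
    _ ≤ (q ^ (b + 1) * p ^ (b + 1)) * q ^ m := by gcongr
    _ = p ^ (b + 1) * q ^ (b + m + 1) := by ring

theorem le_sum_pow_mul_pow_majority {k : ℕ} (hι : Fintype.card ι = 2 * k + 1) {q : ℝ}
    (hq : 1 / 2 ≤ q) (hq₁ : q ≤ 1) :
    q ≤ ∑ t : Finset ι with k + 1 ≤ #t, q ^ #t * (1 - q) ^ #tᶜ := by
  set p := 1 - q
  set w : Finset ι → ℝ := fun t => q ^ #t * p ^ #tᶜ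
  set A := ∑ t with k + 1 ≤ #t, w t
  set B := ∑ t with k + 1 ≤ #t, w tᶜ
  have hAB : A + B = 1 := by
    have hminority : ∀ t : Finset ι, k + 1 ≤ #tᶜ ↔ ¬ k + 1 ≤ #t := fun t => by
      have := card_le_univ t
      rw [card_compl]; omega
    rw [show B = ∑ t with k + 1 ≤ #tᶜ, w t from (sum_filter_compl _ _).symm,
      filter_congr fun t _ => hminority t, sum_filter_add_sum_filter_not,
      Fintype.sum_pow_mul_pow_card_compl, add_sub_cancel, one_pow]
  have hBA : q * B ≤ p * A := by
    rw [mul_sum, mul_sum]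
    refine sum_le_sum fun t ht => ?_
    have hlt : #tᶜ < #t := by
      have := card_compl t
      rw [mem_filter] at ht; omega
    calc q * w tᶜ = q ^ (#tᶜ + 1) * p ^ #t := by simp only [w, compl_compl]; ring
      _ ≤ p ^ (#tᶜ + 1) * q ^ #t := pow_succ_mul_pow_le_of_lt (by linarith) (by linarith) hlt
      _ = p * w t := by ring
  calc q = q * A + q * B := by rw [← mul_add, hAB, mul_one]
    _ ≤ q * A + p * A := by linarith
    _ = A := by ring

end Combinatorics

section Successes

variable {Ω ι β : Type*} [Fintype ι] [DecidableEq ι] [DecidableEq β]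

def successes (X : ι → Ω → β) (b : β) (ω : Ω) : Finset ι := {i | X i ω = b}

theorem successes_preimage_singleton (X : ι → Ω → β) (b : β) (t : Finset ι) :
    successes X b ⁻¹' {t} = ⋂ i, X i ⁻¹' (if i ∈ t then {b} else {b}ᶜ) := by
  ext ω
  simp only [Set.mem_preimage, Set.mem_singleton_iff, Set.mem_iInter, successes, Finset.ext_iff,
    mem_filter, mem_univ, true_and]
  refine forall_congr' fun i => ?_
  split_ifs with hi <;> simp [hi]

variable [MeasurableSpace Ω] [MeasurableSpace β] [MeasurableSingletonClass β] {μ : Measure Ω}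
  [IsProbabilityMeasure μ] {X : ι → Ω → β} {b : β} {q : ℝ}

theorem measure_successes_preimage_singleton (hmeas : ∀ i, Measurable (X i))
    (hind : iIndepFun X μ) (hq₀ : 0 ≤ q) (hq₁ : q ≤ 1)
    (hber : ∀ i, μ (X i ⁻¹' {b}) = ENNReal.ofReal q) (t : Finset ι) :
    μ (successes X b ⁻¹' {t}) = ENNReal.ofReal (q ^ #t * (1 - q) ^ #tᶜ) := by
  have hfactor : ∀ i, μ (X i ⁻¹' (if i ∈ t then {b} else {b}ᶜ))
      = ENNReal.ofReal (if i ∈ t then q else 1 - q) := fun i => by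
    split_ifs
    · exact hber i
    · rw [Set.preimage_compl, prob_compl_eq_one_sub (hmeas i (measurableSet_singleton b)),
        hber i, ENNReal.ofReal_sub _ hq₀, ENNReal.ofReal_one]
  rw [successes_preimage_singleton, hind.meas_iInter fun i => ⟨_, by split_ifs <;> simp, rfl⟩,
    Finset.prod_congr rfl fun i _ => hfactor i,
    ← ENNReal.ofReal_prod_of_nonneg fun i _ => by split_ifs <;> linarith, prod_ite, prod_const,
    prod_const, filter_mem_eq_inter, univ_inter, filter_notMem_eq_sdiff, compl_eq_univ_sdiff]

theorem measure_successes_preimage (hmeas : ∀ i, Measurable (X i))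
    (hind : iIndepFun X μ) (hq₀ : 0 ≤ q) (hq₁ : q ≤ 1)
    (hber : ∀ i, μ (X i ⁻¹' {b}) = ENNReal.ofReal q) (s : Finset (Finset ι)) :
    μ (successes X b ⁻¹' s) = ENNReal.ofReal (∑ t ∈ s, q ^ #t * (1 - q) ^ #tᶜ) := by
  have hfiber : ∀ t, MeasurableSet (successes X b ⁻¹' {t}) := fun t => by
    rw [successes_preimage_singleton]
    exact .iInter fun i => hmeas i (by split_ifs <;> simp)
  rw [← sum_measure_preimage_singleton s fun t _ => hfiber t,
    ENNReal.ofReal_sum_of_nonneg fun t _ => by have := sub_nonneg.2 hq₁; positivity]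
  exact sum_congr rfl fun t _ => measure_successes_preimage_singleton hmeas hind hq₀ hq₁ hber t

end Successes

/-- Majority vote over `2k+1` i.i.d. Bernoulli(q) predictions with `q ≥ 1/2` is
correct with probability at least `q`. -/
theorem majority_vote_correct_prob_ge
    {Ω : Type*} [MeasurableSpace Ω] (μ : Measure Ω) [IsProbabilityMeasure μ]
    (k : ℕ) (q : ℝ) (hq : 1 / 2 ≤ q)
    (X : Fin (2 * k + 1) → Ω → ℕ)
    (hmeas : ∀ i, Measurable (X i))
    (hind : iIndepFun X μ)
    (hbin : ∀ i ω, X i ω ≤ 1)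
    (hber : ∀ i, μ {ω | X i ω = 1} = ENNReal.ofReal q) :
    ENNReal.ofReal q ≤ μ {ω | k + 1 ≤ ∑ i, X i ω} := by
  have hq₁ : q ≤ 1 := ENNReal.ofReal_le_one.mp (hber 0 ▸ prob_le_one)
  have hsum : ∀ ω, ∑ i, X i ω = #(successes X 1 ω) := fun ω => by
    rw [successes, card_filter]
    exact sum_congr rfl fun i _ => by have := hbin i ω; split_ifs <;> omega
  have hevent : {ω | k + 1 ≤ ∑ i, X i ω}
      = successes X 1 ⁻¹' ↑({t | k + 1 ≤ #t} : Finset (Finset (Fin (2 * k + 1)))) := by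
    ext ω
    simp [hsum]
  rw [hevent, measure_successes_preimage hmeas hind (by linarith) hq₁ hber]
  exact ENNReal.ofReal_le_ofReal (le_sum_pow_mul_pow_majority (Fintype.card_fin _) hq hq₁)
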